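/- arXiv:2507.14940 — 2 statements merged into one kernel-verified Lean document; each statement's English description precedes it below -/
import Mathlib

section
/- Let m, n be positive integers, let r ≤ s ≤ min(m,n), let A be a complex m×n matrix of rank r with singular values σ_1 ≥ … ≥ σ_r > 0, and let Ã be a complex m×n matrix of rank s with singular values σ̃_1 ≥ … ≥ σ̃_s > 0. Set H = (AᴴA)^{1/2}, H̃ = (ÃᴴÃ)^{1/2}, F = Σ_{j=1}^r σ_j² + Σ_{j=1}^s σ̃_j², and G = Σ_{j=1}^r σ_j σ̃_j. Then ‖A + Ã‖_F ≥ sqrt( (F − 2G) / (F + 2G) ) · ‖H + H̃‖_F. -/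
open scoped BigOperators Matrix ComplexOrder

noncomputable def frob {m n : ℕ} (A : Matrix (Fin m) (Fin n) ℂ) : ℝ :=
  Real.sqrt (∑ i, ∑ j, ‖A i j‖ ^ 2)

noncomputable def absMat {m n : ℕ} (A : Matrix (Fin m) (Fin n) ℂ) :
    Matrix (Fin n) (Fin n) ℂ :=
  (Matrix.posSemidef_conjTranspose_mul_self A).1.eigenvectorUnitary.1 *
    Matrix.diagonal ((↑) ∘ (Real.sqrt ·) ∘ (Matrix.posSemidef_conjTranspose_mul_self A).1.eigenvalues) *
    (star (Matrix.posSemidef_conjTranspose_mul_self A).1.eigenvectorUnitary : Matrix (Fin n) (Fin n) ℂ)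

noncomputable def svdMat (m n r : ℕ) (σ : ℕ → ℝ) : Matrix (Fin m) (Fin n) ℂ :=
  Matrix.of fun i j =>
    if (i : ℕ) = (j : ℕ) ∧ (i : ℕ) < r then ((σ ((i : ℕ) + 1) : ℝ) : ℂ) else 0

/-- `A` admits a singular value decomposition with singular values
`σ 1, …, σ r` (indexed from 1) on the diagonal. -/
def HasSVD {m n : ℕ} (A : Matrix (Fin m) (Fin n) ℂ) (r : ℕ) (σ : ℕ → ℝ) : Prop :=
  ∃ (U : Matrix (Fin m) (Fin m) ℂ) (V : Matrix (Fin n) (Fin n) ℂ),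
    Uᴴ * U = 1 ∧ U * Uᴴ = 1 ∧ Vᴴ * V = 1 ∧ V * Vᴴ = 1 ∧
    A = U * svdMat m n r σ * Vᴴ

/-- `σ 1 ≥ σ 2 ≥ … ≥ σ r > 0`. -/
def SingVals (r : ℕ) (σ : ℕ → ℝ) : Prop :=
  (∀ j, 1 ≤ j → j ≤ r → 0 < σ j) ∧ ∀ j, 1 ≤ j → j < r → σ (j + 1) ≤ σ j

/-- Generalized polar decomposition: `A = Q * |A|`, where `Q` is a rank-`r` partial
isometry such that the column space of `Qᴴ` equals the column space of `|A|`. -/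
def IsPolar {m n : ℕ} (A Q : Matrix (Fin m) (Fin n) ℂ) (r : ℕ) : Prop :=
  A = Q * absMat A ∧ Q * Qᴴ * Q = Q ∧ Q.rank = r ∧
    LinearMap.range (Matrix.mulVecLin Qᴴ) =
      LinearMap.range (Matrix.mulVecLin (absMat A))

open Finset Matrix

/-!
Write `A = U Σ Vᴴ` and `Ã = Ũ Σ̃ Ṽᴴ`. Then `|A| = V Σ Vᴴ` and `|Ã| = Ṽ Σ̃ Ṽᴴ` are again singular
value decompositions with the same singular values, so both sides of the inequality come from one
estimate for two matrices `X, Y` in SVD form: `‖X + Y‖_F² = F + 2 Re tr(YᴴX)` and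
`|Re tr(YᴴX)| ≤ G`, giving `‖A + Ã‖_F² ≥ F - 2G` and `‖|A| + |Ã|‖_F² ≤ F + 2G`.

The bound on the trace is von Neumann's trace inequality in the form needed here:
`tr(Σ̃ᴴ P Σ Q) = ∑ τₖ σ_c P_kc Q_ck` with `P = ŨᴴU` and `Q = VᴴṼ` unitary, by AM-GM
`|P_kc Q_ck| ≤ d_kc := (|P_kc|² + |Q_ck|²) / 2`, the array `d` is doubly substochastic because the
rows and columns of a unitary matrix are unit vectors, and against such an array the pairing of two
nonincreasing nonnegative sequences is at most their diagonal pairing (Abel summation, twice).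
-/

theorem sum_range_ite_lt {M : Type*} [AddCommMonoid M] (u T : ℕ) (f : ℕ → M) :
    ∑ c ∈ range u, (if c < T then f c else 0) = ∑ c ∈ range (min u T), f c := by
  rw [← sum_filter]
  congr 1
  ext c
  simp only [mem_filter, mem_range]
  omega

theorem Antitone.sum_range_mul_le_of_sum_range_le {μ x y : ℕ → ℝ} {N : ℕ} (hμ : Antitone μ)
    (hμN : 0 ≤ μ N) (h : ∀ t < N, ∑ k ∈ range (t + 1), x k ≤ ∑ k ∈ range (t + 1), y k) :
    ∑ k ∈ range N, μ k * x k ≤ ∑ k ∈ range N, μ k * y k := by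
  have key : ∀ n ≤ N, μ n * (∑ k ∈ range n, y k - ∑ k ∈ range n, x k) ≤
      ∑ k ∈ range n, μ k * y k - ∑ k ∈ range n, μ k * x k := by
    intro n hn
    induction n with
    | zero => simp
    | succ n ih =>
      have hgap := h n hn
      have hstep := hμ (Nat.le_succ n)
      simp only [sum_range_succ] at hgap ⊢
      nlinarith [ih (by omega)]
  have hgap : 0 ≤ ∑ k ∈ range N, y k - ∑ k ∈ range N, x k := by
    cases N with
    | zero => simp
    | succ n => linarith [h n n.lt_succ_self]
  linarith [key N le_rfl, mul_nonneg hμN hgap]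

theorem Antitone.sum_range_mul_le_sum_range_of_le_one {ν w : ℕ → ℝ} {N T : ℕ} (hν : Antitone ν)
    (hν0 : 0 ≤ ν) (hw0 : ∀ c < N, 0 ≤ w c) (hw1 : ∀ c < N, w c ≤ 1)
    (hw : ∑ c ∈ range N, w c ≤ T) :
    ∑ c ∈ range N, ν c * w c ≤ ∑ c ∈ range T, ν c := by
  set y : ℕ → ℝ := fun c => if c < T then 1 else 0
  have hy : ∀ u, ∑ c ∈ range u, y c = min u T := by
    intro u
    simp only [y]
    rw [sum_range_ite_lt]
    simp
  calc ∑ c ∈ range N, ν c * w c ≤ ∑ c ∈ range N, ν c * y c := by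
        refine hν.sum_range_mul_le_of_sum_range_le (hν0 N) fun u hu => ?_
        rw [hy]
        rcases le_total (u + 1) T with huT | huT
        · calc ∑ c ∈ range (u + 1), w c ≤ ∑ c ∈ range (u + 1), 1 :=
                sum_le_sum fun c hc => hw1 c (by rw [mem_range] at hc; omega)
            _ = min (u + 1 : ℕ) T := by simp [huT]
        · calc ∑ c ∈ range (u + 1), w c ≤ ∑ c ∈ range N, w c :=
                sum_le_sum_of_subset_of_nonneg (range_subset_range.2 hu)
                  fun c hc _ => hw0 c (mem_range.1 hc)
            _ ≤ min (u + 1 : ℕ) T := by simpa [huT] using hw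
    _ = ∑ c ∈ range (min N T), ν c := by simp [y, sum_range_ite_lt]
    _ ≤ ∑ c ∈ range T, ν c :=
        sum_le_sum_of_subset_of_nonneg (range_subset_range.2 (min_le_right N T))
          fun c _ _ => hν0 c

theorem Antitone.sum_range_sum_range_mul_le {μ ν : ℕ → ℝ} {d : ℕ → ℕ → ℝ} {M N : ℕ}
    (hμ : Antitone μ) (hμ0 : 0 ≤ μ) (hν : Antitone ν) (hν0 : 0 ≤ ν) (hd : ∀ k c, 0 ≤ d k c)
    (hrow : ∀ k < M, ∑ c ∈ range N, d k c ≤ 1) (hcol : ∀ c < N, ∑ k ∈ range M, d k c ≤ 1) :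
    ∑ k ∈ range M, ∑ c ∈ range N, μ k * ν c * d k c ≤ ∑ k ∈ range M, μ k * ν k := by
  simp only [mul_assoc, ← mul_sum]
  refine hμ.sum_range_mul_le_of_sum_range_le (hμ0 M) fun t ht => ?_
  rw [sum_comm]
  simp only [← mul_sum]
  refine hν.sum_range_mul_le_sum_range_of_le_one hν0 (fun c _ => sum_nonneg fun k _ => hd k c)
    (fun c hc => (sum_le_sum_of_subset_of_nonneg (range_subset_range.2 ht)
      fun k _ _ => hd k c).trans (hcol c hc)) ?_
  rw [sum_comm]
  calc ∑ k ∈ range (t + 1), ∑ c ∈ range N, d k c ≤ ∑ k ∈ range (t + 1), 1 :=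
        sum_le_sum fun k hk => hrow k (by rw [mem_range] at hk; omega)
    _ = (t + 1 : ℕ) := by simp

theorem Real.sqrt_div_mul_le {a b x y : ℝ} (hx : 0 ≤ x) (ha : a ≤ x ^ 2) (hb : y ^ 2 ≤ b) :
    √(a / b) * y ≤ x := by
  calc √(a / b) * y ≤ √(a / b) * |y| := mul_le_mul_of_nonneg_left (le_abs_self y) (by positivity)
    _ = √(a / b * y ^ 2) := by rw [Real.sqrt_mul' _ (sq_nonneg y), Real.sqrt_sq_eq_abs]
    _ ≤ √(x ^ 2) := by
        refine Real.sqrt_le_sqrt ?_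
        rcases le_or_gt (a / b) 0 with hab | hab
        · exact (mul_nonpos_of_nonpos_of_nonneg hab (sq_nonneg y)).trans (sq_nonneg x)
        · have hb0 : 0 < b := by
            rcases div_pos_iff.1 hab with h | h
            · exact h.2
            · exact absurd h.2 (not_lt.2 ((sq_nonneg y).trans hb))
          calc a / b * y ^ 2 ≤ a / b * b := mul_le_mul_of_nonneg_left hb hab.le
            _ = a := div_mul_cancel₀ a hb0.ne'
            _ ≤ x ^ 2 := ha
    _ = x := Real.sqrt_sq hx

section natEntry

variable {α : Type*} {m n p : ℕ}

-- Padding by zeros lets matrices of different shapes be compared through sums over `range`.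
def natEntry [Zero α] (M : Matrix (Fin m) (Fin n) α) (i j : ℕ) : α :=
  if h : i < m ∧ j < n then M ⟨i, h.1⟩ ⟨j, h.2⟩ else 0

@[simp]
theorem natEntry_val [Zero α] (M : Matrix (Fin m) (Fin n) α) (i : Fin m) (j : Fin n) :
    natEntry M i j = M i j := by
  simp [natEntry]

theorem natEntry_of_le_left [Zero α] (M : Matrix (Fin m) (Fin n) α) {i : ℕ} (hi : m ≤ i)
    (j : ℕ) : natEntry M i j = 0 :=
  dif_neg fun h => by omega

theorem natEntry_of_le_right [Zero α] (M : Matrix (Fin m) (Fin n) α) (i : ℕ) {j : ℕ}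
    (hj : n ≤ j) : natEntry M i j = 0 :=
  dif_neg fun h => by omega

theorem ext_natEntry [Zero α] {M N : Matrix (Fin m) (Fin n) α}
    (h : ∀ i j, natEntry M i j = natEntry N i j) : M = N :=
  Matrix.ext fun i j => by simpa using h i j

theorem natEntry_one [Zero α] [One α] (i : ℕ) :
    natEntry (1 : Matrix (Fin m) (Fin m) α) i i = if i < m then 1 else 0 := by
  by_cases hi : i < m <;> simp [natEntry, hi]

theorem natEntry_conjTranspose [AddMonoid α] [StarAddMonoid α] (M : Matrix (Fin m) (Fin n) α)
    (i j : ℕ) : natEntry Mᴴ i j = star (natEntry M j i) := by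
  by_cases h : i < n ∧ j < m
  · simp [natEntry, h, conjTranspose_apply]
  · simp [natEntry, h, and_comm]

theorem natEntry_mul [NonUnitalNonAssocSemiring α] (M : Matrix (Fin m) (Fin n) α)
    (N : Matrix (Fin n) (Fin p) α) (i j : ℕ) :
    natEntry (M * N) i j = ∑ k ∈ range n, natEntry M i k * natEntry N k j := by
  by_cases h : i < m ∧ j < p
  · rw [natEntry, dif_pos h, mul_apply, ← Fin.sum_univ_eq_sum_range]
    simp [natEntry, h]
  · rw [natEntry, dif_neg h]
    refine (sum_eq_zero fun k hk => ?_).symm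
    rcases not_and_or.1 h with hi | hj
    · rw [natEntry_of_le_left M (not_lt.1 hi), zero_mul]
    · rw [natEntry_of_le_right N k (not_lt.1 hj), mul_zero]

theorem trace_eq_sum_natEntry [AddCommMonoid α] (M : Matrix (Fin n) (Fin n) α) :
    M.trace = ∑ i ∈ range n, natEntry M i i := by
  rw [trace, ← Fin.sum_univ_eq_sum_range (fun i => natEntry M i i)]
  simp

end natEntry

theorem sum_range_norm_sq_natEntry_row_le_one {m n : ℕ} {P : Matrix (Fin m) (Fin n) ℂ}
    (hP : P * Pᴴ = 1) (i N : ℕ) : ∑ j ∈ range N, ‖natEntry P i j‖ ^ 2 ≤ 1 := by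
  have hrow : ∑ j ∈ range n, ‖natEntry P i j‖ ^ 2 ≤ 1 := by
    have h : ((∑ j ∈ range n, ‖natEntry P i j‖ ^ 2 : ℝ) : ℂ) = if i < m then 1 else 0 := by
      rw [← natEntry_one, ← hP, natEntry_mul]
      push_cast
      refine sum_congr rfl fun j _ => ?_
      rw [natEntry_conjTranspose, ← Complex.mul_conj']
      rfl
    split_ifs at h <;> norm_cast at h <;> simp [h]
  have hvanish : ∀ j, ‖natEntry P i j‖ ^ 2 = if j < n then ‖natEntry P i j‖ ^ 2 else 0 := by
    intro j
    split_ifs with hj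
    · rfl
    · simp [natEntry_of_le_right P i (not_lt.1 hj)]
  calc ∑ j ∈ range N, ‖natEntry P i j‖ ^ 2 = ∑ j ∈ range (min N n), ‖natEntry P i j‖ ^ 2 := by
        rw [← sum_range_ite_lt]
        exact sum_congr rfl fun j _ => hvanish j
    _ ≤ ∑ j ∈ range n, ‖natEntry P i j‖ ^ 2 :=
        sum_le_sum_of_subset_of_nonneg (range_subset_range.2 (min_le_right N n))
          fun _ _ _ => sq_nonneg _
    _ ≤ 1 := hrow

theorem sum_range_norm_sq_natEntry_col_le_one {m n : ℕ} {P : Matrix (Fin m) (Fin n) ℂ}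
    (hP : Pᴴ * P = 1) (j N : ℕ) : ∑ i ∈ range N, ‖natEntry P i j‖ ^ 2 ≤ 1 := by
  have := sum_range_norm_sq_natEntry_row_le_one (P := Pᴴ) (by rwa [conjTranspose_conjTranspose]) j N
  simpa only [natEntry_conjTranspose, norm_star] using this

theorem frob_sq {m n : ℕ} (X : Matrix (Fin m) (Fin n) ℂ) : frob X ^ 2 = (Xᴴ * X).trace.re := by
  rw [frob, Real.sq_sqrt (by positivity), trace, Complex.re_sum, sum_comm]
  refine sum_congr rfl fun j _ => ?_
  simp only [Matrix.diag, mul_apply, conjTranspose_apply, Complex.re_sum]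
  refine sum_congr rfl fun i _ => ?_
  rw [mul_comm, Complex.star_def, Complex.mul_conj']
  norm_cast

theorem frob_add_sq {m n : ℕ} (X Y : Matrix (Fin m) (Fin n) ℂ) :
    frob (X + Y) ^ 2 = frob X ^ 2 + frob Y ^ 2 + 2 * (Yᴴ * X).trace.re := by
  have hswap : (Xᴴ * Y).trace.re = (Yᴴ * X).trace.re := by
    rw [← Complex.conj_re, ← Complex.star_def, ← trace_conjTranspose, conjTranspose_mul,
      conjTranspose_conjTranspose]
  simp only [frob_sq, conjTranspose_add, Matrix.add_mul, Matrix.mul_add, trace_add,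
    Complex.add_re, hswap]
  ring

def singSeq (r : ℕ) (σ : ℕ → ℝ) (i : ℕ) : ℝ :=
  if i < r then σ (i + 1) else 0

theorem SingVals.singSeq_nonneg {r : ℕ} {σ : ℕ → ℝ} (h : SingVals r σ) : 0 ≤ singSeq r σ := by
  intro i
  unfold singSeq
  split_ifs with hi
  · exact (h.1 (i + 1) (by omega) (by omega)).le
  · exact le_rfl

theorem SingVals.antitone_singSeq {r : ℕ} {σ : ℕ → ℝ} (h : SingVals r σ) :
    Antitone (singSeq r σ) := by
  refine antitone_nat_of_succ_le fun i => ?_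
  by_cases hi : i + 1 < r
  · simp only [singSeq, hi, if_pos (show i < r by omega)]
    exact h.2 (i + 1) (by omega) hi
  · rw [singSeq, if_neg hi]
    exact h.singSeq_nonneg i

theorem sum_range_singSeq_mul {n r s : ℕ} {σ τ : ℕ → ℝ} (hrs : r ≤ s) (hrn : r ≤ n) :
    ∑ i ∈ range n, singSeq s τ i * singSeq r σ i = ∑ j ∈ Icc 1 r, σ j * τ j := by
  have hterm : ∀ i, singSeq s τ i * singSeq r σ i = if i < r then σ (i + 1) * τ (i + 1) else 0 := by
    intro i
    unfold singSeq
    split_ifs <;> first | omega | ring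
  rw [← Ico_add_one_right_eq_Icc, ← zero_add 1, ← sum_Ico_add', ← range_eq_Ico]
  simp only [hterm, sum_range_ite_lt, min_eq_right hrn]

theorem sum_range_singSeq_sq {n r : ℕ} {σ : ℕ → ℝ} (hrn : r ≤ n) :
    ∑ i ∈ range n, singSeq r σ i ^ 2 = ∑ j ∈ Icc 1 r, σ j ^ 2 := by
  simpa only [sq] using sum_range_singSeq_mul (τ := σ) le_rfl hrn

section svdMat

variable {m n r : ℕ} {σ : ℕ → ℝ}

theorem conjTranspose_svdMat : (svdMat m n r σ)ᴴ = svdMat n m r σ := by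
  ext i j
  simp only [conjTranspose_apply, svdMat, of_apply]
  by_cases h : (j : ℕ) = i
  · simp only [h, true_and]
    split_ifs <;> simp
  · simp [h, Ne.symm h]

theorem natEntry_svdMat (hrm : r ≤ m) (hrn : r ≤ n) (i j : ℕ) :
    natEntry (svdMat m n r σ) i j = if i = j then (singSeq r σ i : ℂ) else 0 := by
  unfold natEntry svdMat singSeq
  split_ifs <;> simp_all; omega

theorem natEntry_svdMat_mul {p : ℕ} (hrm : r ≤ m) (hrn : r ≤ n) (X : Matrix (Fin n) (Fin p) ℂ)
    (i j : ℕ) : natEntry (svdMat m n r σ * X) i j = singSeq r σ i * natEntry X i j := by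
  rw [natEntry_mul]
  simp only [natEntry_svdMat hrm hrn, ite_mul, zero_mul, sum_ite_eq, mem_range]
  split_ifs with hi
  · rfl
  · rw [natEntry_of_le_left X (not_lt.1 hi), mul_zero]

theorem conjTranspose_svdMat_mul_svdMat (hrm : r ≤ m) (hrn : r ≤ n) :
    (svdMat m n r σ)ᴴ * svdMat m n r σ = svdMat n n r σ * svdMat n n r σ := by
  refine ext_natEntry fun i j => ?_
  rw [conjTranspose_svdMat, natEntry_svdMat_mul hrn hrm, natEntry_svdMat_mul hrn hrn,
    natEntry_svdMat hrm hrn, natEntry_svdMat hrn hrn]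

theorem svdMat_eq_diagonal : svdMat n n r σ = diagonal fun i : Fin n => (singSeq r σ i : ℂ) := by
  ext i j
  by_cases h : i = j
  · simp [svdMat, singSeq, h, apply_ite ((↑) : ℝ → ℂ)]
  · simp [svdMat, h, Fin.val_ne_of_ne h]

theorem trace_svdMat_mul {s : ℕ} {τ : ℕ → ℝ} (hrm : r ≤ m) (hrn : r ≤ n) (hsm : s ≤ m)
    (hsn : s ≤ n) (P : Matrix (Fin m) (Fin m) ℂ) (Q : Matrix (Fin n) (Fin n) ℂ) :
    ((svdMat m n s τ)ᴴ * P * svdMat m n r σ * Q).trace =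
      ∑ k ∈ range n, ∑ c ∈ range m,
        ((singSeq s τ k * singSeq r σ c : ℝ) : ℂ) * (natEntry P k c * natEntry Q c k) := by
  rw [conjTranspose_svdMat, trace_eq_sum_natEntry]
  simp only [Matrix.mul_assoc, natEntry_svdMat_mul hsn hsm, natEntry_mul,
    natEntry_svdMat_mul hrm hrn, mul_sum]
  refine sum_congr rfl fun k _ => sum_congr rfl fun c _ => ?_
  push_cast
  ring

end svdMat

theorem abs_re_trace_svdMat_mul_le {m n r s : ℕ} {σ τ : ℕ → ℝ} {P : Matrix (Fin m) (Fin m) ℂ}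
    {Q : Matrix (Fin n) (Fin n) ℂ} (hP : P ∈ unitaryGroup (Fin m) ℂ)
    (hQ : Q ∈ unitaryGroup (Fin n) ℂ) (hσ : SingVals r σ) (hτ : SingVals s τ) (hrm : r ≤ m)
    (hrn : r ≤ n) (hsm : s ≤ m) (hsn : s ≤ n) :
    |((svdMat m n s τ)ᴴ * P * svdMat m n r σ * Q).trace.re| ≤
      ∑ k ∈ range n, singSeq s τ k * singSeq r σ k := by
  set μ := singSeq s τ
  set ν := singSeq r σ
  set d : ℕ → ℕ → ℝ := fun k c => (‖natEntry P k c‖ ^ 2 + ‖natEntry Q c k‖ ^ 2) / 2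
  have hProw := sum_range_norm_sq_natEntry_row_le_one (mem_unitaryGroup_iff.1 hP)
  have hPcol := sum_range_norm_sq_natEntry_col_le_one (mem_unitaryGroup_iff'.1 hP)
  have hQrow := sum_range_norm_sq_natEntry_row_le_one (mem_unitaryGroup_iff.1 hQ)
  have hQcol := sum_range_norm_sq_natEntry_col_le_one (mem_unitaryGroup_iff'.1 hQ)
  rw [trace_svdMat_mul hrm hrn hsm hsn]
  calc _ ≤ ‖∑ k ∈ range n, ∑ c ∈ range m, ((μ k * ν c : ℝ) : ℂ) *
        (natEntry P k c * natEntry Q c k)‖ := Complex.abs_re_le_norm _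
    _ ≤ ∑ k ∈ range n, ∑ c ∈ range m, μ k * ν c * d k c := by
        refine (norm_sum_le _ _).trans (sum_le_sum fun k _ => (norm_sum_le _ _).trans
          (sum_le_sum fun c _ => ?_))
        have hμν : 0 ≤ μ k * ν c := mul_nonneg (hτ.singSeq_nonneg k) (hσ.singSeq_nonneg c)
        rw [norm_mul, norm_mul, Complex.norm_real, Real.norm_of_nonneg hμν]
        have hamgm := two_mul_le_add_sq (‖natEntry P k c‖) (‖natEntry Q c k‖)
        exact mul_le_mul_of_nonneg_left (by simp only [d]; linarith) hμν
    _ ≤ ∑ k ∈ range n, μ k * ν k := by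
        refine hτ.antitone_singSeq.sum_range_sum_range_mul_le hτ.singSeq_nonneg
          hσ.antitone_singSeq hσ.singSeq_nonneg (fun k c => by positivity) (fun k _ => ?_)
          fun c _ => ?_
        · simp only [d, ← sum_div, sum_add_distrib]
          linarith [hProw k m, hQcol k m]
        · simp only [d, ← sum_div, sum_add_distrib]
          linarith [hPcol c n, hQrow c n]

theorem HasSVD.exists_mem_unitaryGroup {m n r : ℕ} {σ : ℕ → ℝ} {A : Matrix (Fin m) (Fin n) ℂ}
    (h : HasSVD A r σ) : ∃ U ∈ unitaryGroup (Fin m) ℂ, ∃ V ∈ unitaryGroup (Fin n) ℂ,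
      A = U * svdMat m n r σ * Vᴴ := by
  obtain ⟨U, V, hU, hU', hV, hV', rfl⟩ := h
  exact ⟨U, mem_unitaryGroup_iff.2 hU', V, mem_unitaryGroup_iff.2 hV', rfl⟩

theorem abs_re_trace_conjTranspose_mul_le {m n r s : ℕ} {σ τ : ℕ → ℝ}
    {A B : Matrix (Fin m) (Fin n) ℂ} (hA : HasSVD A r σ) (hB : HasSVD B s τ)
    (hσ : SingVals r σ) (hτ : SingVals s τ) (hrm : r ≤ m) (hrn : r ≤ n) (hsm : s ≤ m)
    (hsn : s ≤ n) :
    |(Bᴴ * A).trace.re| ≤ ∑ k ∈ range n, singSeq s τ k * singSeq r σ k := by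
  obtain ⟨U, hU, V, hV, rfl⟩ := hA.exists_mem_unitaryGroup
  obtain ⟨U', hU', V', hV', rfl⟩ := hB.exists_mem_unitaryGroup
  have htrace : ((U' * svdMat m n s τ * V'ᴴ)ᴴ * (U * svdMat m n r σ * Vᴴ)).trace =
      ((svdMat m n s τ)ᴴ * (U'ᴴ * U) * svdMat m n r σ * (Vᴴ * V')).trace := by
    simp only [conjTranspose_mul, conjTranspose_conjTranspose, Matrix.mul_assoc]
    rw [trace_mul_comm]
    simp only [Matrix.mul_assoc]
  rw [htrace]
  exact abs_re_trace_svdMat_mul_le (mul_mem (Unitary.star_mem hU') hU)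
    (mul_mem (Unitary.star_mem hV) hV') hσ hτ hrm hrn hsm hsn

theorem frob_sq_of_hasSVD {m n r : ℕ} {σ : ℕ → ℝ} {A : Matrix (Fin m) (Fin n) ℂ}
    (hA : HasSVD A r σ) (hrm : r ≤ m) (hrn : r ≤ n) :
    frob A ^ 2 = ∑ i ∈ range n, singSeq r σ i ^ 2 := by
  obtain ⟨U, V, hU, -, hV, -, rfl⟩ := hA
  have htrace : ((U * svdMat m n r σ * Vᴴ)ᴴ * (U * svdMat m n r σ * Vᴴ)).trace =
      ((svdMat m n r σ)ᴴ * svdMat m n r σ).trace := by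
    simp only [conjTranspose_mul, conjTranspose_conjTranspose, Matrix.mul_assoc]
    rw [trace_mul_comm, ← Matrix.mul_assoc Uᴴ, hU, Matrix.one_mul]
    simp only [Matrix.mul_assoc, hV, Matrix.mul_one]
  rw [frob_sq, htrace, conjTranspose_svdMat, trace_eq_sum_natEntry]
  simp only [natEntry_svdMat_mul hrn hrm, natEntry_svdMat hrm hrn, if_true]
  norm_cast
  simp [sq]

open scoped MatrixOrder in
theorem absMat_eq_of_mul_self {m n : ℕ} {A : Matrix (Fin m) (Fin n) ℂ}
    {B : Matrix (Fin n) (Fin n) ℂ} (hB : B.PosSemidef) (h : B * B = Aᴴ * A) : absMat A = B := by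
  have hM := posSemidef_conjTranspose_mul_self A
  rw [← CFC.sqrt_unique h hB.nonneg, CFC.sqrt_eq_real_sqrt _ hM.nonneg, cfcₙ_eq_cfc, hM.1.cfc_eq,
    IsHermitian.cfc, Unitary.conjStarAlgAut_apply]
  rfl

theorem HasSVD.absMat {m n r : ℕ} {σ : ℕ → ℝ} {A : Matrix (Fin m) (Fin n) ℂ}
    (hA : HasSVD A r σ) (hσ : 0 ≤ singSeq r σ) (hrm : r ≤ m) (hrn : r ≤ n) :
    HasSVD (absMat A) r σ := by
  obtain ⟨U, V, hU, -, hV, hV', rfl⟩ := hA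
  refine ⟨V, V, hV, hV', hV, hV', absMat_eq_of_mul_self ?_ ?_⟩
  · rw [svdMat_eq_diagonal]
    exact (posSemidef_diagonal_iff.2 fun i => by exact_mod_cast hσ i).mul_mul_conjTranspose_same V
  · simp only [conjTranspose_mul, conjTranspose_conjTranspose, Matrix.mul_assoc]
    rw [← Matrix.mul_assoc Vᴴ V, hV, Matrix.one_mul, ← Matrix.mul_assoc Uᴴ U, hU, Matrix.one_mul,
      ← Matrix.mul_assoc (svdMat n n r σ), ← Matrix.mul_assoc (svdMat m n r σ)ᴴ,
      conjTranspose_svdMat_mul_svdMat hrm hrn]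

theorem abs_frob_add_sq_sub_le {m n r s : ℕ} {σ τ : ℕ → ℝ} {A B : Matrix (Fin m) (Fin n) ℂ}
    (hA : HasSVD A r σ) (hB : HasSVD B s τ) (hσ : SingVals r σ) (hτ : SingVals s τ)
    (hrm : r ≤ m) (hrn : r ≤ n) (hsm : s ≤ m) (hsn : s ≤ n) :
    |frob (A + B) ^ 2 - (∑ i ∈ range n, singSeq r σ i ^ 2 + ∑ i ∈ range n, singSeq s τ i ^ 2)| ≤
      2 * ∑ i ∈ range n, singSeq s τ i * singSeq r σ i := by
  rw [frob_add_sq, frob_sq_of_hasSVD hA hrm hrn, frob_sq_of_hasSVD hB hsm hsn]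
  have htrace := abs_re_trace_conjTranspose_mul_le hA hB hσ hτ hrm hrn hsm hsn
  rw [abs_le] at htrace ⊢
  constructor <;> linarith

theorem strong_Lee_conjecture_lower_general
    (m n r s : ℕ) (hrs : r ≤ s) (hsmn : s ≤ min m n)
    (A At : Matrix (Fin m) (Fin n) ℂ)
    (σ τ : ℕ → ℝ) (hσ : SingVals r σ) (hτ : SingVals s τ)
    (hA : HasSVD A r σ) (hAtilde : HasSVD At s τ)
    (F G : ℝ)
    (hF : F = ∑ j ∈ Finset.Icc 1 r, σ j ^ 2 + ∑ j ∈ Finset.Icc 1 s, τ j ^ 2)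
    (hG : G = ∑ j ∈ Finset.Icc 1 r, σ j * τ j) :
    frob (A + At) ≥
      Real.sqrt ((F - 2 * G) / (F + 2 * G)) *
        frob (absMat A + absMat At) := by
  have hsm : s ≤ m := hsmn.trans (min_le_left m n)
  have hsn : s ≤ n := hsmn.trans (min_le_right m n)
  have hrn : r ≤ n := hrs.trans hsn
  have hF' : F = ∑ i ∈ range n, singSeq r σ i ^ 2 + ∑ i ∈ range n, singSeq s τ i ^ 2 := by
    rw [hF, sum_range_singSeq_sq hrn, sum_range_singSeq_sq hsn]
  have hG' : G = ∑ i ∈ range n, singSeq s τ i * singSeq r σ i := by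
    rw [hG, sum_range_singSeq_mul hrs hrn]
  have hsum := abs_le.1 <|
    abs_frob_add_sq_sub_le hA hAtilde hσ hτ (hrs.trans hsm) hrn hsm hsn
  have habs := abs_le.1 <|
    abs_frob_add_sq_sub_le (hA.absMat hσ.singSeq_nonneg (hrs.trans hsm) hrn)
      (hAtilde.absMat hτ.singSeq_nonneg hsm hsn) hσ hτ hrn hrn hsn hsn
  rw [← hF', ← hG'] at hsum habs
  exact Real.sqrt_div_mul_le (Real.sqrt_nonneg _) (by linarith) (by linarith)

theorem strong_Lee_conjecture_lower
    (m n r s : ℕ) (hm : 0 < m) (hn : 0 < n) (hrs : r ≤ s) (hsmn : s ≤ min m n)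
    (A At : Matrix (Fin m) (Fin n) ℂ)
    (σ τ : ℕ → ℝ) (hσ : SingVals r σ) (hτ : SingVals s τ)
    (hA : HasSVD A r σ) (hAtilde : HasSVD At s τ)
    (hrankA : A.rank = r) (hrankAt : At.rank = s)
    (F G : ℝ)
    (hF : F = ∑ j ∈ Finset.Icc 1 r, σ j ^ 2 + ∑ j ∈ Finset.Icc 1 s, τ j ^ 2)
    (hG : G = ∑ j ∈ Finset.Icc 1 r, σ j * τ j) :
    frob (A + At) ≥
      Real.sqrt ((F - 2 * G) / (F + 2 * G)) *
        frob (absMat A + absMat At) :=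
  strong_Lee_conjecture_lower_general m n r s hrs hsmn A At σ τ hσ hτ hA hAtilde F G hF hG
end

section
/- Let m, n be positive integers, let r ≤ s ≤ min(m,n), and let A be a nonzero complex m×n matrix of rank r with singular values σ_1 ≥ … ≥ σ_r > 0 and B a nonzero complex m×n matrix of rank s with singular values σ̂_1 ≥ … ≥ σ̂_s > 0. If r ≠ s, or r = s but σ_j ≠ σ̂_j for some j, then the strict inequality ‖A Bᴴ‖_F < (1/2) · ‖ |A|² + |B|² ‖_F holds, where |A|² = AᴴA and |B|² = BᴴB. -/
/-!
Write `P = Aᴴ A` and `Q = Bᴴ B`. Since `tr (P Q) = ‖A Bᴴ‖_F²`, expanding both squares gives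
`‖P + Q‖_F² = ‖P - Q‖_F² + 4 ‖A Bᴴ‖_F²`, so the inequality is strict as soon as `P ≠ Q`.
By the SVD, the eigenvalues of `P` in decreasing order are `σ_1², …, σ_r², 0, …, 0`, and those of
`Q` are `σ̂_1², …, σ̂_s², 0, …, 0`; hence `P = Q` would force `r = s` and `σ_j = σ̂_j` for all `j`.
-/

open scoped BigOperators Matrix ComplexOrder

section Frobenius

variable {m n : ℕ}

theorem frob_nonneg (X : Matrix (Fin m) (Fin n) ℂ) : 0 ≤ frob X :=
  Real.sqrt_nonneg _

theorem ofReal_frob_sq (X : Matrix (Fin m) (Fin n) ℂ) :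
    ((frob X ^ 2 : ℝ) : ℂ) = (Xᴴ * X).trace := by
  rw [frob, Real.sq_sqrt (by positivity), Matrix.trace, Finset.sum_comm]
  push_cast
  refine Finset.sum_congr rfl fun j _ => Finset.sum_congr rfl fun i _ => ?_
  simp [Complex.conj_mul']

theorem frob_pos {X : Matrix (Fin m) (Fin n) ℂ} (hX : X ≠ 0) : 0 < frob X := by
  refine (frob_nonneg X).lt_of_ne' fun h => hX ?_
  rw [← Matrix.trace_conjTranspose_mul_self_eq_zero_iff, ← ofReal_frob_sq, h]
  simp

theorem frob_gram_add_sq (A B : Matrix (Fin m) (Fin n) ℂ) :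
    frob (Aᴴ * A + Bᴴ * B) ^ 2 = frob (Aᴴ * A - Bᴴ * B) ^ 2 + 4 * frob (A * Bᴴ) ^ 2 := by
  have hcross : (B * Aᴴ * (A * Bᴴ)).trace = (Aᴴ * A * (Bᴴ * B)).trace := by
    rw [Matrix.mul_assoc, Matrix.trace_mul_comm, Matrix.mul_assoc, Matrix.mul_assoc,
      Matrix.mul_assoc]
  have hcomm : (Bᴴ * B * (Aᴴ * A)).trace = (Aᴴ * A * (Bᴴ * B)).trace := Matrix.trace_mul_comm _ _
  suffices h : ((frob (Aᴴ * A + Bᴴ * B) ^ 2 : ℝ) : ℂ) =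
      ((frob (Aᴴ * A - Bᴴ * B) ^ 2 : ℝ) : ℂ) + 4 * ((frob (A * Bᴴ) ^ 2 : ℝ) : ℂ) by
    exact_mod_cast h
  simp only [ofReal_frob_sq, Matrix.conjTranspose_add, Matrix.conjTranspose_sub,
    Matrix.conjTranspose_mul, Matrix.conjTranspose_conjTranspose, Matrix.add_mul, Matrix.mul_add,
    Matrix.sub_mul, Matrix.mul_sub, Matrix.trace_add, Matrix.trace_sub, hcross, hcomm]
  ring

theorem frob_mul_conjTranspose_lt {A B : Matrix (Fin m) (Fin n) ℂ} (h : Aᴴ * A ≠ Bᴴ * B) :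
    frob (A * Bᴴ) < 1 / 2 * frob (Aᴴ * A + Bᴴ * B) := by
  have hdiff := frob_pos (sub_ne_zero.mpr h)
  nlinarith [frob_gram_add_sq A B, frob_nonneg (A * Bᴴ), frob_nonneg (Aᴴ * A + Bᴴ * B)]

end Frobenius

theorem Matrix.charpoly_mul_mul_of_mul_eq_one {n R : Type*} [Fintype n] [DecidableEq n]
    [CommRing R] {V W : Matrix n n R} (h : W * V = 1) (N : Matrix n n R) :
    (V * N * W).charpoly = N.charpoly := by
  rw [Matrix.charpoly_mul_comm, ← Matrix.mul_assoc, h, Matrix.one_mul]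

theorem Matrix.roots_charpoly_diagonal {n K : Type*} [Fintype n] [DecidableEq n] [Field K]
    (d : n → K) : (Matrix.diagonal d).charpoly.roots = Finset.univ.val.map d := by
  rw [Matrix.charpoly_diagonal, Polynomial.roots_prod]
  · simp
  · simp [Finset.prod_ne_zero_iff, Polynomial.X_sub_C_ne_zero]

theorem Antitone.eq_of_map_univ_eq {n : ℕ} {α : Type*} [PartialOrder α] {d e : Fin n → α}
    (hd : Antitone d) (he : Antitone e) (h : Finset.univ.val.map d = Finset.univ.val.map e) :
    d = e := by
  rw [Fin.univ_val_map, Fin.univ_val_map, Multiset.coe_eq_coe] at h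
  exact List.ofFn_injective (h.eq_of_sortedGE hd.sortedGE_ofFn he.sortedGE_ofFn)

theorem Antitone.eq_of_charpoly_diagonal_eq {n : ℕ} {d e : Fin n → ℝ} (hd : Antitone d)
    (he : Antitone e)
    (h : (Matrix.diagonal ((↑) ∘ d) : Matrix (Fin n) (Fin n) ℂ).charpoly =
      (Matrix.diagonal ((↑) ∘ e)).charpoly) : d = e := by
  have hroots := congrArg Polynomial.roots h
  rw [Matrix.roots_charpoly_diagonal, Matrix.roots_charpoly_diagonal, ← Multiset.map_map,
    ← Multiset.map_map] at hroots
  exact hd.eq_of_map_univ_eq he (Multiset.map_injective Complex.ofReal_injective hroots)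

section SingularValues

variable {m n r : ℕ} {σ : ℕ → ℝ}

theorem SingVals.antitoneOn (hσ : SingVals r σ) : AntitoneOn σ (Set.Icc 1 r) :=
  antitoneOn_of_add_one_le Set.ordConnected_Icc fun a _ ha ha' => hσ.2 a ha.1 (by grind)

def sqSingVals (n r : ℕ) (σ : ℕ → ℝ) : Fin n → ℝ :=
  fun j => if (j : ℕ) < r then σ (j + 1) ^ 2 else 0

theorem SingVals.antitone_sqSingVals (hσ : SingVals r σ) : Antitone (sqSingVals n r σ) := by
  intro j k hjk
  simp only [sqSingVals]
  by_cases hk : (k : ℕ) < r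
  · have hj : (j : ℕ) < r := lt_of_le_of_lt hjk hk
    rw [if_pos hk, if_pos hj]
    have hpos := hσ.1 (k + 1) (by omega) hk
    have hle := hσ.antitoneOn ⟨by omega, hj⟩ ⟨by omega, hk⟩ (by simpa using hjk)
    gcongr
  · rw [if_neg hk]
    split_ifs <;> positivity

theorem conjTranspose_svdMat_mul_self (hr : r ≤ m) :
    (svdMat m n r σ)ᴴ * svdMat m n r σ = Matrix.diagonal ((↑) ∘ sqSingVals n r σ) := by
  ext j k
  simp only [Matrix.mul_apply, Matrix.conjTranspose_apply, svdMat, Matrix.of_apply,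
    Matrix.diagonal_apply, sqSingVals, Function.comp_apply]
  by_cases hj : (j : ℕ) < r
  · rw [Finset.sum_eq_single (⟨j, by omega⟩ : Fin m)
      (fun i _ hi => by simp [show (i : ℕ) ≠ j from fun h => hi (Fin.ext h)]) (by simp)]
    by_cases hjk : j = k
    · subst hjk; simp [hj, sq]
    · simp [hjk, Fin.val_ne_of_ne hjk]
  · refine (Finset.sum_eq_zero fun i _ => ?_).trans (by simp [hj])
    by_cases hi : (i : ℕ) = j <;> simp [hi, hj]

theorem HasSVD.conjTranspose_mul_self_eq {A : Matrix (Fin m) (Fin n) ℂ} (hA : HasSVD A r σ)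
    (hr : r ≤ m) : ∃ V : Matrix (Fin n) (Fin n) ℂ, Vᴴ * V = 1 ∧
      Aᴴ * A = V * Matrix.diagonal ((↑) ∘ sqSingVals n r σ) * Vᴴ := by
  obtain ⟨U, V, hU, -, hV, -, rfl⟩ := hA
  refine ⟨V, hV, ?_⟩
  rw [← conjTranspose_svdMat_mul_self hr]
  simp only [Matrix.conjTranspose_mul, Matrix.conjTranspose_conjTranspose, Matrix.mul_assoc]
  rw [← Matrix.mul_assoc Uᴴ U, hU, Matrix.one_mul]

theorem SingVals.sqSingVals_pos_iff (hσ : SingVals r σ) (j : Fin n) :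
    0 < sqSingVals n r σ j ↔ (j : ℕ) < r := by
  simp only [sqSingVals]
  split_ifs with hj
  · exact iff_of_true (pow_pos (hσ.1 (j + 1) (by omega) hj) 2) hj
  · exact iff_of_false (lt_irrefl 0) hj

theorem HasSVD.sqSingVals_eq_of_gram_eq {s : ℕ} {τ : ℕ → ℝ} {A B : Matrix (Fin m) (Fin n) ℂ}
    (hA : HasSVD A r σ) (hB : HasSVD B s τ) (hσ : SingVals r σ) (hτ : SingVals s τ)
    (hr : r ≤ m) (hs : s ≤ m) (h : Aᴴ * A = Bᴴ * B) :
    sqSingVals n r σ = sqSingVals n s τ := by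
  obtain ⟨V, hV, hAV⟩ := hA.conjTranspose_mul_self_eq hr
  obtain ⟨W, hW, hBW⟩ := hB.conjTranspose_mul_self_eq hs
  refine hσ.antitone_sqSingVals.eq_of_charpoly_diagonal_eq hτ.antitone_sqSingVals ?_
  rw [← Matrix.charpoly_mul_mul_of_mul_eq_one hV, ← hAV, h, hBW,
    Matrix.charpoly_mul_mul_of_mul_eq_one hW]

theorem SingVals.eq_of_sqSingVals_eq {s : ℕ} {τ : ℕ → ℝ} (hσ : SingVals r σ)
    (hτ : SingVals s τ) (hr : r ≤ n) (hs : s ≤ n) (h : sqSingVals n r σ = sqSingVals n s τ) :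
    r = s ∧ ∀ j, 1 ≤ j → j ≤ r → σ j = τ j := by
  have hsupp (j : Fin n) : (j : ℕ) < r ↔ (j : ℕ) < s := by
    rw [← hσ.sqSingVals_pos_iff, h, hτ.sqSingVals_pos_iff]
  have hrs : r = s := by
    rcases lt_trichotomy r s with hlt | heq | hlt
    · exact absurd ((hsupp ⟨r, by omega⟩).2 hlt) (lt_irrefl r)
    · exact heq
    · exact absurd ((hsupp ⟨s, by omega⟩).1 hlt) (lt_irrefl s)
  refine ⟨hrs, fun j hj1 hjr => ?_⟩
  have hj := congrFun h ⟨j - 1, by omega⟩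
  simp only [sqSingVals, if_pos (show j - 1 < r by omega), if_pos (show j - 1 < s by omega),
    Nat.sub_add_cancel hj1] at hj
  exact (sq_eq_sq₀ (hσ.1 j hj1 hjr).le (hτ.1 j hj1 (hrs ▸ hjr)).le).1 hj

end SingularValues

theorem strict_AM_GM_general
    (m n r s : ℕ) (hrs : r ≤ s) (hsmn : s ≤ min m n)
    (A B : Matrix (Fin m) (Fin n) ℂ)
    (σ σh : ℕ → ℝ) (hσ : SingVals r σ) (hσh : SingVals s σh)
    (hA : HasSVD A r σ) (hB : HasSVD B s σh)
    (hne : r ≠ s ∨ (r = s ∧ ∃ j, 1 ≤ j ∧ j ≤ r ∧ σ j ≠ σh j)) :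
    frob (A * Bᴴ) < (1 / 2) * frob (Aᴴ * A + Bᴴ * B) := by
  have hsm : s ≤ m := hsmn.trans (min_le_left _ _)
  have hsn : s ≤ n := hsmn.trans (min_le_right _ _)
  refine frob_mul_conjTranspose_lt fun h => ?_
  obtain ⟨hrs', hσσh⟩ := hσ.eq_of_sqSingVals_eq hσh (hrs.trans hsn) hsn
    (hA.sqSingVals_eq_of_gram_eq hB hσ hσh (hrs.trans hsm) hsm h)
  rcases hne with hne | ⟨-, j, hj1, hjr, hj⟩
  · exact hne hrs'
  · exact hj (hσσh j hj1 hjr)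

theorem strict_AM_GM
    (m n r s : ℕ) (hm : 0 < m) (hn : 0 < n) (hrs : r ≤ s) (hsmn : s ≤ min m n)
    (A B : Matrix (Fin m) (Fin n) ℂ) (hA0 : A ≠ 0) (hB0 : B ≠ 0)
    (σ σh : ℕ → ℝ) (hσ : SingVals r σ) (hσh : SingVals s σh)
    (hA : HasSVD A r σ) (hB : HasSVD B s σh)
    (hrankA : A.rank = r) (hrankB : B.rank = s)
    (hne : r ≠ s ∨ (r = s ∧ ∃ j, 1 ≤ j ∧ j ≤ r ∧ σ j ≠ σh j)) :
    frob (A * Bᴴ) < (1 / 2) * frob (Aᴴ * A + Bᴴ * B) :=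
  strict_AM_GM_general m n r s hrs hsmn A B σ σh hσ hσh hA hB hne
end
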